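/- Let P* be an optimal tuple of n points in [0,1]^2. Then for every index i, every δ with 0 < δ ≤ 1 − x^(i)_2 and every q ∈ [0,1]^2, the closed local discrepancy of the up-shifted tuple satisfies δ̄(up(P*,i,δ), q) ≤ d*(P*). Analogously, for every δ with 0 < δ ≤ 1 − x^(i)_1 and every q ∈ [0,1]^2, δ̄(ri(P*,i,δ), q) ≤ d*(P*). -/
import Mathlib


open Finset

noncomputable section

open scoped Classical

/-- Number of points of the tuple `P` lying in the open anchored box `[0,q)`. -/
def openCount {n d : ℕ} (P : Fin n → Fin d → ℝ) (q : Fin d → ℝ) : ℕ :=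
  (Finset.univ.filter (fun i : Fin n => ∀ j, P i j < q j)).card

/-- Number of points of the tuple `P` lying in the closed anchored box `[0,q]`. -/
def closedCount {n d : ℕ} (P : Fin n → Fin d → ℝ) (q : Fin d → ℝ) : ℕ :=
  (Finset.univ.filter (fun i : Fin n => ∀ j, P i j ≤ q j)).card

/-- Open local discrepancy `δ(P,q) = ∏ q_j − #{i : x⁽ⁱ⁾ ∈ [0,q)}/n`. -/
def openDisc {n d : ℕ} (P : Fin n → Fin d → ℝ) (q : Fin d → ℝ) : ℝ :=
  (∏ j, q j) - (openCount P q : ℝ) / n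

/-- Closed local discrepancy `δ̄(P,q) = #{i : x⁽ⁱ⁾ ∈ [0,q]}/n − ∏ q_j`. -/
def closedDisc {n d : ℕ} (P : Fin n → Fin d → ℝ) (q : Fin d → ℝ) : ℝ :=
  (closedCount P q : ℝ) / n - ∏ j, q j

/-- `max(δ(P,q), δ̄(P,q))`. -/
def localDisc {n d : ℕ} (P : Fin n → Fin d → ℝ) (q : Fin d → ℝ) : ℝ :=
  max (openDisc P q) (closedDisc P q)

/-- The L∞ star discrepancy `d*(P) = sup_{q ∈ [0,1]^d} max(δ(P,q), δ̄(P,q))`. -/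
def starDisc {n d : ℕ} (P : Fin n → Fin d → ℝ) : ℝ :=
  sSup {r : ℝ | ∃ q : Fin d → ℝ, (∀ j, q j ∈ Set.Icc (0:ℝ) 1) ∧ r = localDisc P q}

/-- A tuple of `n` points in `[0,1]^2` is optimal if its star discrepancy is minimal
among all `n`-point tuples in `[0,1]^2`. -/
def IsOptimal {n : ℕ} (P : Fin n → Fin 2 → ℝ) : Prop :=
  (∀ i j, P i j ∈ Set.Icc (0:ℝ) 1) ∧
    ∀ Q : Fin n → Fin 2 → ℝ, (∀ i j, Q i j ∈ Set.Icc (0:ℝ) 1) → starDisc P ≤ starDisc Q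

/-- Up-shift: replace `x⁽ⁱ⁾` by `(x⁽ⁱ⁾₁, x⁽ⁱ⁾₂ + δ)`. -/
def upShift {n : ℕ} (P : Fin n → Fin 2 → ℝ) (i : Fin n) (δ : ℝ) : Fin n → Fin 2 → ℝ :=
  Function.update P i (fun j => P i j + if j = (1 : Fin 2) then δ else 0)

/-- Right-shift: replace `x⁽ⁱ⁾` by `(x⁽ⁱ⁾₁ + δ, x⁽ⁱ⁾₂)`. -/
def rightShift {n : ℕ} (P : Fin n → Fin 2 → ℝ) (i : Fin n) (δ : ℝ) : Fin n → Fin 2 → ℝ :=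
  Function.update P i (fun j => P i j + if j = (0 : Fin 2) then δ else 0)

/-- Down-shift: replace `x⁽ⁱ⁾` by `(x⁽ⁱ⁾₁, x⁽ⁱ⁾₂ − δ)`. -/
def downShift {n : ℕ} (P : Fin n → Fin 2 → ℝ) (i : Fin n) (δ : ℝ) : Fin n → Fin 2 → ℝ :=
  Function.update P i (fun j => P i j - if j = (1 : Fin 2) then δ else 0)

/-- Left-shift: replace `x⁽ⁱ⁾` by `(x⁽ⁱ⁾₁ − δ, x⁽ⁱ⁾₂)`. -/
def leftShift {n : ℕ} (P : Fin n → Fin 2 → ℝ) (i : Fin n) (δ : ℝ) : Fin n → Fin 2 → ℝ :=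
  Function.update P i (fun j => P i j - if j = (0 : Fin 2) then δ else 0)

lemma count_le {n : ℕ} (P Q : Fin n → Fin 2 → ℝ)
    (h : ∀ k j, P k j ≤ Q k j) (q : Fin 2 → ℝ) :
    closedCount Q q ≤ closedCount P q := by
  apply Finset.card_le_card
  intro k hk
  simp only [Finset.mem_filter, Finset.mem_univ, true_and] at hk ⊢
  exact fun j => le_trans (h k j) (hk j)

lemma localDisc_le_starDisc {n d : ℕ} (P : Fin n → Fin d → ℝ)
    (q : Fin d → ℝ) (hq : ∀ j, q j ∈ Set.Icc (0:ℝ) 1) :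
    localDisc P q ≤ starDisc P := by
  apply le_csSup
  · refine ⟨1, ?_⟩
    rintro r ⟨q', hq', rfl⟩
    have hcnt : (closedCount P q' : ℝ) / n ≤ 1 := by
      rcases Nat.eq_zero_or_pos n with h0 | hpos
      · simp [h0]
      · rw [div_le_one (by exact_mod_cast hpos)]
        have hc : closedCount P q' ≤ n := by
          unfold closedCount
          exact le_trans (Finset.card_filter_le _ _) (by simp)
        exact_mod_cast hc
    have hprod0 : (0:ℝ) ≤ ∏ j, q' j := Finset.prod_nonneg fun j _ => (hq' j).1
    have hprod1 : (∏ j, q' j) ≤ 1 :=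
      Finset.prod_le_one (fun j _ => (hq' j).1) (fun j _ => (hq' j).2)
    have hcnt0 : (0:ℝ) ≤ (openCount P q' : ℝ) / n := by positivity
    unfold localDisc openDisc closedDisc
    apply max_le <;> linarith
  · exact ⟨q, hq, rfl⟩

/-- For an optimal `n`-point tuple `P*` in `[0,1]²`, any up-shift (resp.
right-shift) never violates a closed-box constraint: the closed local discrepancy of the
shifted tuple at any `q ∈ [0,1]²` is at most `d*(P*)`. -/
theorem stmt_4 {n : ℕ} (P : Fin n → Fin 2 → ℝ) (hopt : IsOptimal P) (i : Fin n) (δ : ℝ)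
    (q : Fin 2 → ℝ) (hq : ∀ j, q j ∈ Set.Icc (0:ℝ) 1) :
    (0 < δ → δ ≤ 1 - P i 1 → closedDisc (upShift P i δ) q ≤ starDisc P) ∧
    (0 < δ → δ ≤ 1 - P i 0 → closedDisc (rightShift P i δ) q ≤ starDisc P) := by
  have key : ∀ Q : Fin n → Fin 2 → ℝ, (∀ k j, P k j ≤ Q k j) →
      closedDisc Q q ≤ starDisc P := by
    intro Q hQ
    have h1 : closedDisc Q q ≤ closedDisc P q := by
      unfold closedDisc
      have := count_le P Q hQ q
      have : (closedCount Q q : ℝ) ≤ (closedCount P q : ℝ) := by exact_mod_cast this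
      have hn : (0:ℝ) ≤ (n:ℝ) := by positivity
      gcongr
    calc closedDisc Q q ≤ closedDisc P q := h1
      _ ≤ localDisc P q := le_max_right _ _
      _ ≤ starDisc P := localDisc_le_starDisc P q hq
  constructor
  · intro hδ _
    apply key
    intro k j
    unfold upShift
    rcases eq_or_ne k i with rfl | hk
    · simp only [Function.update_self]
      split <;> linarith
    · simp [Function.update_of_ne hk]
  · intro hδ _
    apply key
    intro k j
    unfold rightShift
    rcases eq_or_ne k i with rfl | hk
    · simp only [Function.update_self]
      split <;> linarith
    · simp [Function.update_of_ne hk]
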